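/- The heights h(q_1),…,h(q_n) are pairwise distinct modulo n, and ∑_{j=1}^n h(q_j) = Nn + n(n−1)/2. -/

import Mathlib

open Polynomial Matrix

/-- The height of an `n`-dimensional vector polynomial. -/
noncomputable def vheight (n : ℕ) (r : Fin n → Polynomial ℂ) : WithBot ℕ :=
  Finset.univ.sup fun j : Fin n => n • (r j).degree + ((j : ℕ) : WithBot ℕ)

/-- The class `𝓜(n,N)` of band symmetric matrices with degeneration indices `m`. -/
structure MatrixClassM (n N : ℕ) (A : Matrix (Fin N) (Fin N) ℝ) (m : ℕ → ℕ) : Prop where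
  symm : A.IsSymm
  band : ∀ k l : Fin N, (n : ℤ) < |(k : ℤ) - (l : ℤ)| → A k l = 0
  m_zero : m 0 = 0
  m_last : m n = N
  m_mono : ∀ j < n, m j < m (j + 1)
  m_one : 1 < m 1
  m_le : ∀ j, 1 ≤ j → j ≤ n → m j ≤ N - n + j
  d_pos : ∀ j < n, ∀ k l : Fin N, (l : ℕ) = (k : ℕ) + (n - j) →
      m j < (k : ℕ) + 1 → (k : ℕ) + 1 < m (j + 1) → 0 < A l k
  d_zero : ∀ j < n, ∀ k l : Fin N, (l : ℕ) = (k : ℕ) + (n - j) →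
      m (j + 1) ≤ (k : ℕ) + 1 → (k : ℕ) + 1 ≤ N - n + j → A l k = 0

/-- The rank-one jump matrix `σ_k`. -/
def sigmaJump {n N : ℕ} (αc : Fin N → Fin n → ℂ) (k : Fin N) :
    Matrix (Fin n) (Fin n) ℂ :=
  Matrix.of fun i j => (starRingEnd ℂ) (αc k i) * αc k j

/-- The inner product `⟨r,s⟩_{L²(σ)}` for vector polynomials. -/
noncomputable def L2inner {n N : ℕ} (x : Fin N → ℝ)
    (σ : Fin N → Matrix (Fin n) (Fin n) ℂ) (r s : Fin n → Polynomial ℂ) : ℂ :=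
  ∑ k, ∑ i, ∑ j,
    (starRingEnd ℂ) ((r i).eval ((x k : ℂ))) * σ k i j * (s j).eval ((x k : ℂ))

/-- The interpolation set `𝕊`. -/
def interpSet {n N : ℕ} (z : Fin N → ℂ) (α : Fin N → Fin n → ℂ) :
    Set (Fin n → Polynomial ℂ) :=
  {r | ∀ k, ∑ j, α k j * (r j).eval (z k) = 0}

/-- `𝕄(r_1) + ⋯ + 𝕄(r_m)`. -/
def polySpan {n m : ℕ} (r : Fin m → Fin n → Polynomial ℂ) :
    Set (Fin n → Polynomial ℂ) :=
  {s | ∃ c : Fin m → Polynomial ℂ, s = fun jj => ∑ i, c i * r i jj}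

/-- `𝕄(r_1) + ⋯ + 𝕄(r_{j-1})`. -/
def prevSpan {n : ℕ} (r : Fin n → Fin n → Polynomial ℂ) (j : Fin n) :
    Set (Fin n → Polynomial ℂ) :=
  {s | ∃ c : Fin n → Polynomial ℂ,
      s = fun jj => ∑ i ∈ Finset.univ.filter (fun i => i < j), c i * r i jj}

/-- `r` is a sequence of generators of `S`. -/
def IsGenSeq {n : ℕ} (S : Set (Fin n → Polynomial ℂ))
    (r : Fin n → Fin n → Polynomial ℂ) : Prop :=
  ∀ j : Fin n, r j ≠ 0 ∧ r j ∈ S \ prevSpan r j ∧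
    ∀ s ∈ S \ prevSpan r j, s ≠ 0 → vheight n (r j) ≤ vheight n s

/-!
Index the rows from `0`. A row `k` other than the rows `m i - 1` lies in a segment
`m j ≤ k < m (j + 1) - 1`; there `A k (k + n - j) > 0` and all entries further right vanish, so
the `k`-th equation of `(A - z) φ = 0` expresses `A k (k + n - j) • φ(k + n - j)` as `z • φ(k)`
minus vectors of smaller height. Hence `h(φ(k + n - j)) = h(φ(k)) + n`, and starting from
`h(φ(k)) = k` for `k < n` (triangularity of `T`) the heights of the rows are strictly increasing;
likewise `h(q_i) = h(φ(m i - 1)) + n`. As `k ↦ k + n - j` maps the other rows bijectively onto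
`[n, N)`, the heights `h(q_i)` together with the heights of the rows in `[n, N)` are exactly the
heights of all rows shifted by `n`. Summing gives `∑ h(q_i) = N n + n (n - 1) / 2`; reducing
mod `n` shows that the residues of the `h(q_i)` are `0, …, n - 1`.
-/

lemma nsmul_bot_add {n : ℕ} (hn : n ≠ 0) (c : WithBot ℕ) : n • (⊥ : WithBot ℕ) + c = ⊥ := by
  rw [nsmul_eq_mul, WithBot.mul_bot (by exact_mod_cast hn), WithBot.bot_add]

lemma nsmul_add_le_nsmul_add {n : ℕ} {d e : WithBot ℕ} (h : d ≤ e) (c : WithBot ℕ) :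
    n • d + c ≤ n • e + c :=
  add_le_add (nsmul_le_nsmul_right h n) le_rfl

section VectorHeight

variable {n : ℕ}

lemma vheight_le_iff (r : Fin n → ℂ[X]) (b : WithBot ℕ) :
    vheight n r ≤ b ↔ ∀ j, n • (r j).degree + (j : ℕ) ≤ b := by
  simp [vheight, Finset.sup_le_iff]

lemma le_vheight (r : Fin n → ℂ[X]) (j : Fin n) :
    n • (r j).degree + (j : ℕ) ≤ vheight n r :=
  Finset.le_sup (f := fun j : Fin n => n • (r j).degree + ((j : ℕ) : WithBot ℕ))
    (Finset.mem_univ j)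

@[simp] lemma vheight_zero : vheight n 0 = ⊥ :=
  le_bot_iff.mp ((vheight_le_iff _ _).2 fun j => by
    rw [Pi.zero_apply, degree_zero, nsmul_bot_add (Fin.pos j).ne'])

lemma vheight_map₂_le (f : ℂ[X] → ℂ[X] → ℂ[X])
    (hf : ∀ p q, (f p q).degree ≤ p.degree ⊔ q.degree) (r s : Fin n → ℂ[X]) :
    vheight n (fun j => f (r j) (s j)) ≤ vheight n r ⊔ vheight n s := by
  refine (vheight_le_iff _ _).2 fun j => ?_
  calc n • (f (r j) (s j)).degree + (j : ℕ)
      ≤ n • ((r j).degree ⊔ (s j).degree) + (j : ℕ) := nsmul_add_le_nsmul_add (hf _ _) _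
    _ = (n • (r j).degree + (j : ℕ)) ⊔ (n • (s j).degree + (j : ℕ)) :=
        Monotone.map_sup (fun _ _ h => nsmul_add_le_nsmul_add h _) _ _
    _ ≤ vheight n r ⊔ vheight n s := sup_le_sup (le_vheight r j) (le_vheight s j)

lemma vheight_add_le (r s : Fin n → ℂ[X]) :
    vheight n (r + s) ≤ vheight n r ⊔ vheight n s :=
  vheight_map₂_le _ degree_add_le r s

lemma vheight_sub_le (r s : Fin n → ℂ[X]) :
    vheight n (r - s) ≤ vheight n r ⊔ vheight n s :=
  vheight_map₂_le _ degree_sub_le r s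

lemma vheight_sum_le {ι : Type*} (s : Finset ι) (v : ι → Fin n → ℂ[X]) :
    vheight n (∑ l ∈ s, v l) ≤ s.sup fun l => vheight n (v l) := by
  classical
  induction s using Finset.induction_on with
  | empty => simp
  | insert a s ha ih =>
    rw [Finset.sum_insert ha, Finset.sup_insert]
    exact (vheight_add_le _ _).trans (sup_le_sup le_rfl ih)

lemma vheight_X_smul (r : Fin n → ℂ[X]) : vheight n ((X : ℂ[X]) • r) = vheight n r + n := by
  have hshift : ∀ d c : WithBot ℕ, n • (d + 1) + c = n • d + c + n := by
    intro d c; rw [nsmul_add, nsmul_one]; abel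
  rw [vheight, vheight, Finset.apply_sup_eq_sup_comp (fun x : WithBot ℕ => x + n)
    ((add_left_mono (a := (n : WithBot ℕ))).map_sup · ·) (WithBot.bot_add _)]
  simp only [Function.comp_def, Pi.smul_apply, smul_eq_mul, mul_comm X, degree_mul_X, hshift]

lemma vheight_C_smul {a : ℂ} (ha : a ≠ 0) (r : Fin n → ℂ[X]) :
    vheight n (C a • r) = vheight n r := by
  simp [vheight, degree_C_mul ha]

lemma vheight_C_smul_lt {a : ℂ} {r : Fin n → ℂ[X]} {h : ℕ}
    (H : a ≠ 0 → vheight n r < h) : vheight n (C a • r) < h := by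
  rcases eq_or_ne a 0 with rfl | ha
  · simp
  · rw [vheight_C_smul ha]; exact H ha

/-- At a coordinate `j` where the height of `r` is attained, `s j` has smaller degree, so the
leading term of `r j` survives. -/
lemma vheight_sub_eq_of_lt {r s : Fin n → ℂ[X]} (h : vheight n s < vheight n r) :
    vheight n (r - s) = vheight n r := by
  have hne : (Finset.univ : Finset (Fin n)).Nonempty := by
    by_contra he
    simp [vheight, Finset.not_nonempty_iff_eq_empty.mp he] at h
  obtain ⟨j, -, hj⟩ := Finset.exists_mem_eq_sup _ hne
    fun j : Fin n => n • (r j).degree + ((j : ℕ) : WithBot ℕ)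
  rw [← vheight] at hj
  have hlt : (s j).degree < (r j).degree := by
    by_contra! hle
    exact ((nsmul_add_le_nsmul_add hle _).trans (le_vheight s j)).not_gt (hj ▸ h)
  refine le_antisymm ((vheight_sub_le r s).trans (sup_le le_rfl h.le)) ?_
  calc vheight n r = n • (r j).degree + (j : ℕ) := hj
    _ = n • ((r - s) j).degree + (j : ℕ) := by
        rw [Pi.sub_apply, degree_sub_eq_left_of_degree_lt hlt]
    _ ≤ vheight n (r - s) := le_vheight _ j

lemma vheight_sub_sum_eq {ι : Type*} (s : Finset ι) (v : ι → Fin n → ℂ[X])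
    {r : Fin n → ℂ[X]} {h : ℕ} (hr : vheight n r = h) (hv : ∀ l ∈ s, vheight n (v l) < h) :
    vheight n (r - ∑ l ∈ s, v l) = h := by
  rw [← hr]
  refine vheight_sub_eq_of_lt ((vheight_sum_le s v).trans_lt ?_)
  rw [hr]
  exact (Finset.sup_lt_iff (WithBot.bot_lt_coe h)).2 hv

lemma vheight_eq_of_sum_smul_eq {N : ℕ} {Φ : Fin N → Fin n → ℂ[X]} {a : Fin N → ℂ}
    {r t : Fin N} {h : ℕ} (hrow : ∑ l, C (a l) • Φ l = (X : ℂ[X]) • Φ r) (hat : a t ≠ 0)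
    (hr : vheight n (Φ r) + n = h) (hlow : ∀ l ≠ t, vheight n (C (a l) • Φ l) < h) :
    vheight n (Φ t) = h := by
  have hsplit : C (a t) • Φ t = (X : ℂ[X]) • Φ r - ∑ l ∈ Finset.univ.erase t, C (a l) • Φ l := by
    rw [← hrow, ← Finset.add_sum_erase _ _ (Finset.mem_univ t), add_sub_cancel_right]
  rw [← vheight_C_smul hat, hsplit]
  exact vheight_sub_sum_eq _ _ (by rw [vheight_X_smul, hr])
    fun l hl => hlow l (Finset.ne_of_mem_erase hl)

lemma vheight_C_comp {i : Fin n} {c : Fin n → ℂ} (hc : ∀ j, i < j → c j = 0) (hci : c i ≠ 0) :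
    vheight n (fun j => C (c j)) = (i : ℕ) := by
  refine le_antisymm ((vheight_le_iff _ _).2 fun j => ?_) ?_
  · rcases lt_or_ge i j with hij | hji
    · rw [hc j hij, map_zero, degree_zero, nsmul_bot_add (Fin.pos j).ne']
      exact bot_le
    · calc n • (C (c j)).degree + (j : ℕ) ≤ n • (0 : WithBot ℕ) + (i : ℕ) :=
            add_le_add (nsmul_le_nsmul_right degree_C_le n) (by exact_mod_cast hji)
        _ = (i : ℕ) := by simp
  · simpa [degree_C hci] using le_vheight (fun j => C (c j)) i

end VectorHeight

structure DegenerationIndices (n N : ℕ) (m : ℕ → ℕ) : Prop where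
  zero : m 0 = 0
  last : m n = N
  lt_succ : ∀ j < n, m j < m (j + 1)
  le_sub_add : ∀ j, 1 ≤ j → j ≤ n → m j ≤ N - n + j

lemma MatrixClassM.degenerationIndices {n N : ℕ} {A : Matrix (Fin N) (Fin N) ℝ} {m : ℕ → ℕ}
    (hA : MatrixClassM n N A m) : DegenerationIndices n N m :=
  ⟨hA.m_zero, hA.m_last, hA.m_mono, hA.m_le⟩

namespace DegenerationIndices

variable {n N : ℕ} {m : ℕ → ℕ}

lemma add_sub_le (hm : DegenerationIndices n N m) {a b : ℕ} (hab : a ≤ b) (hb : b ≤ n) :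
    m a + (b - a) ≤ m b := by
  induction b, hab using Nat.le_induction with
  | base => simp
  | succ b hab ih => have := hm.lt_succ b (by omega); have := ih (by omega); omega

lemma apply_le_apply (hm : DegenerationIndices n N m) {a b : ℕ} (hab : a ≤ b) (hb : b ≤ n) :
    m a ≤ m b :=
  (Nat.le_add_right _ _).trans (hm.add_sub_le hab hb)

lemma apply_lt_apply (hm : DegenerationIndices n N m) {a b : ℕ} (hab : a < b) (hb : b ≤ n) :
    m a < m b := by
  have := hm.add_sub_le hab.le hb; omega

lemma self_le_apply (hm : DegenerationIndices n N m) {a : ℕ} (ha : a ≤ n) : a ≤ m a := by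
  have := hm.add_sub_le (Nat.zero_le a) ha; rw [hm.zero] at this; omega

lemma le (hm : DegenerationIndices n N m) : n ≤ N :=
  hm.last ▸ hm.self_le_apply le_rfl

lemma pos (hm : DegenerationIndices n N m) (hN : 0 < N) : 0 < n := by
  by_contra h0
  have := hm.last
  simp_all [hm.zero]

end DegenerationIndices

section RowHeight

variable (n : ℕ) (m : ℕ → ℕ)

/-- For `n ≤ t < N`, the row `k = predRow n m t` lies in the segment `m j ≤ k < m (j + 1) - 1`
with `j = predSeg n m t`, and `t = k + (n - j)` is the column of its outermost nonzero entry. -/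
def predSeg (t : ℕ) : ℕ :=
  Nat.findGreatest (fun j => m j + (n - j) ≤ t) (n - 1)

def predRow (t : ℕ) : ℕ :=
  t - (n - predSeg n m t)

/-- The height `h(φ(t))` of row `t`; the guard `n = 0` only serves termination. -/
def rowHeight (t : ℕ) : ℕ :=
  if t < n ∨ n = 0 then t else rowHeight (predRow n m t) + n
termination_by t
decreasing_by
  have : predSeg n m t ≤ n - 1 := Nat.findGreatest_le _
  unfold predRow; omega

variable {n m}

lemma predSeg_le (t : ℕ) : predSeg n m t ≤ n - 1 := Nat.findGreatest_le _

lemma predSeg_mono : Monotone (predSeg n m) := fun _ _ h =>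
  Nat.findGreatest_mono_left (fun _ hj => hj.trans h) _

lemma predRow_lt (hn : 0 < n) {t : ℕ} (ht : n ≤ t) : predRow n m t < t := by
  have := predSeg_le (n := n) (m := m) t
  unfold predRow; omega

lemma predRow_lt_predRow (hn : 0 < n) {a b : ℕ} (ha : n ≤ a) (hab : a < b) :
    predRow n m a < predRow n m b := by
  have := predSeg_mono (n := n) (m := m) hab.le
  have := predSeg_le (n := n) (m := m) b
  unfold predRow; omega

lemma rowHeight_of_lt {t : ℕ} (ht : t < n) : rowHeight n m t = t := by
  rw [rowHeight, if_pos (Or.inl ht)]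

lemma rowHeight_of_le (hn : 0 < n) {t : ℕ} (ht : n ≤ t) :
    rowHeight n m t = rowHeight n m (predRow n m t) + n := by
  rw [rowHeight, if_neg (by omega)]

lemma rowHeight_strictMono (hn : 0 < n) : StrictMono (rowHeight n m) := by
  intro a b hab
  induction b using Nat.strong_induction_on generalizing a with
  | _ b ih =>
    rcases lt_or_ge b n with hb | hb
    · rw [rowHeight_of_lt hb, rowHeight_of_lt (hab.trans hb)]; exact hab
    rw [rowHeight_of_le hn hb]
    rcases lt_or_ge a n with ha | ha
    · rw [rowHeight_of_lt ha]; omega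
    rw [rowHeight_of_le hn ha]
    have := ih _ (predRow_lt (m := m) hn hb) (predRow_lt_predRow (m := m) hn ha hab)
    omega

end RowHeight

namespace DegenerationIndices

variable {n N : ℕ} {m : ℕ → ℕ}

lemma predRow_spec (hm : DegenerationIndices n N m) {t : ℕ} (ht : n ≤ t) (htN : t < N) :
    predSeg n m t < n ∧ m (predSeg n m t) ≤ predRow n m t ∧
      predRow n m t + 1 < m (predSeg n m t + 1) ∧ predRow n m t + (n - predSeg n m t) = t := by
  have hn := hm.pos (by omega)
  have hle := predSeg_le (n := n) (m := m) t
  have hP : m (predSeg n m t) + (n - predSeg n m t) ≤ t :=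
    Nat.findGreatest_spec (P := fun j => m j + (n - j) ≤ t) (Nat.zero_le _)
      (by simpa [hm.zero] using ht)
  have hnext : t < m (predSeg n m t + 1) + (n - (predSeg n m t + 1)) := by
    rcases (Nat.lt_or_ge (predSeg n m t) (n - 1)) with hlt | hge
    · exact not_le.1 (Nat.findGreatest_is_greatest (P := fun j => m j + (n - j) ≤ t)
        (Nat.lt_succ_self _) (by omega))
    · rw [show predSeg n m t + 1 = n by omega, hm.last]; omega
  unfold predRow; omega

lemma predSeg_add_sub (hm : DegenerationIndices n N m) {j k : ℕ} (hj : j < n) (hk : m j ≤ k)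
    (hk' : k + 1 < m (j + 1)) : predSeg n m (k + (n - j)) = j := by
  refine Nat.findGreatest_eq_iff.2 ⟨by omega, fun _ => by omega, fun i hji hi => ?_⟩
  have := hm.add_sub_le (a := j + 1) (b := i) hji (by omega)
  omega

lemma predRow_add_sub (hm : DegenerationIndices n N m) {j k : ℕ} (hj : j < n) (hk : m j ≤ k)
    (hk' : k + 1 < m (j + 1)) : predRow n m (k + (n - j)) = k := by
  unfold predRow; rw [hm.predSeg_add_sub hj hk hk']; omega

lemma add_sub_lt (hm : DegenerationIndices n N m) {j k : ℕ} (hj : j < n)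
    (hk' : k + 1 < m (j + 1)) : k + (n - j) < N := by
  have := hm.le_sub_add (j + 1) (by omega) (by omega)
  have := hm.le
  omega

lemma predRow_not_terminal (hm : DegenerationIndices n N m) {t : ℕ} (ht : n ≤ t) (htN : t < N)
    (i : ℕ) (hi : i ≤ n) : m i ≠ predRow n m t + 1 := by
  obtain ⟨hj, hlo, hhi, -⟩ := hm.predRow_spec ht htN
  rcases le_or_gt i (predSeg n m t) with h | h
  · have := hm.apply_le_apply h hj.le; omega
  · have := hm.apply_le_apply (a := predSeg n m t + 1) h hi; omega

lemma exists_segment (hm : DegenerationIndices n N m) {k : ℕ} (hk : k < N) :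
    ∃ j < n, m j ≤ k ∧ k < m (j + 1) := by
  have hn := hm.pos (by omega)
  have hex : ∃ j, k < m (j + 1) := ⟨n - 1, by rw [Nat.sub_add_cancel hn, hm.last]; exact hk⟩
  classical
  refine ⟨Nat.find hex, ?_, ?_, Nat.find_spec hex⟩
  · have := Nat.find_min' hex (m := n - 1) (by rw [Nat.sub_add_cancel hn, hm.last]; exact hk)
    omega
  · rcases Nat.eq_zero_or_pos (Nat.find hex) with h0 | hpos
    · rw [h0, hm.zero]; exact Nat.zero_le k
    · have := Nat.find_min hex (m := Nat.find hex - 1) (by omega)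
      rw [Nat.sub_add_cancel hpos] at this; omega

lemma rowHeight_terminal_lt (hm : DegenerationIndices n N m) {j : ℕ} (hj0 : 0 < j) (hj : j ≤ n) :
    rowHeight n m (m j - 1 + (n - j)) < rowHeight n m (m j - 1) + n := by
  set t := m j - 1 + (n - j)
  rcases lt_or_ge t n with ht | ht
  · rw [rowHeight_of_lt ht]; omega
  have hn : 0 < n := by omega
  have hseg : predSeg n m t < j := by
    by_contra! hge
    have hP : m (predSeg n m t) + (n - predSeg n m t) ≤ t :=
      Nat.findGreatest_of_ne_zero (P := fun i => m i + (n - i) ≤ t) rfl (by omega)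
    have := hm.add_sub_le hge ((predSeg_le t).trans (Nat.sub_le n 1))
    omega
  have hpred : predRow n m t < m j - 1 := by unfold predRow; omega
  rw [rowHeight_of_le hn ht]
  have := rowHeight_strictMono (m := m) hn hpred
  omega

lemma map_terminal (hm : DegenerationIndices n N m) {β : Type*} (f : ℕ → β) :
    (Finset.univ.val.map fun i : Fin n => f (m (i + 1) - 1)) =
      ((Multiset.range N).filter fun k => ∃ i : Fin n, m (i + 1) = k + 1).map f := by
  have hpos : ∀ i : Fin n, 0 < m (i + 1) := fun i =>
    (hm.self_le_apply (a := i + 1) (by omega)).trans_lt' (by omega)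
  have hlast : ∀ i : Fin n, m (i + 1) ≤ N := fun i => hm.last ▸ hm.apply_le_apply (by omega) le_rfl
  refine Multiset.map_eq_map_of_bij_of_nodup _ _ Finset.univ.nodup
    ((Multiset.nodup_range N).filter _) (fun i _ => m (i + 1) - 1) (fun i _ => ?_)
    (fun i _ i' _ h => ?_) (fun k hk => ?_) (fun _ _ => rfl)
  · have := hpos i; have := hlast i
    exact Multiset.mem_filter.2 ⟨Multiset.mem_range.2 (by omega), i, by omega⟩
  · have := hpos i; have := hpos i'
    refine Fin.ext (le_antisymm ?_ ?_) <;> by_contra! hlt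
    · have := hm.apply_lt_apply (a := i' + 1) (b := i + 1) (by omega) (by omega); omega
    · have := hm.apply_lt_apply (a := i + 1) (b := i' + 1) (by omega) (by omega); omega
  · obtain ⟨-, i, hi⟩ := Multiset.mem_filter.1 hk
    exact ⟨i, Finset.mem_univ_val i, by omega⟩

/-- `predRow` is a bijection from `[n, N)` onto the rows not of the form `m i - 1`. -/
lemma map_rowHeight_Ico (hm : DegenerationIndices n N m) (hn : 0 < n) :
    (Multiset.Ico n N).map (rowHeight n m) =
      ((Multiset.range N).filter fun k => ¬∃ i : Fin n, m (i + 1) = k + 1).map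
        fun k => rowHeight n m k + n := by
  refine Multiset.map_eq_map_of_bij_of_nodup _ _ Multiset.nodup_Ico
    ((Multiset.nodup_range N).filter _) (fun t _ => predRow n m t) (fun t ht => ?_)
    (fun a ha b hb h => ?_) (fun k hk => ?_)
    (fun t ht => rowHeight_of_le hn (Multiset.mem_Ico.1 ht).1)
  · rw [Multiset.mem_Ico] at ht
    refine Multiset.mem_filter.2 ⟨Multiset.mem_range.2 ?_, ?_⟩
    · have := predRow_lt (m := m) hn ht.1; omega
    · rintro ⟨i, hi⟩
      exact hm.predRow_not_terminal ht.1 ht.2 (i + 1) (by omega) hi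
  · rw [Multiset.mem_Ico] at ha hb
    rcases lt_trichotomy a b with hab | hab | hab
    · exact absurd h (predRow_lt_predRow hn ha.1 hab).ne
    · exact hab
    · exact absurd h (predRow_lt_predRow hn hb.1 hab).ne'
  · obtain ⟨hk, hnt⟩ := Multiset.mem_filter.1 hk
    obtain ⟨j, hj, hjk, hkj⟩ := hm.exists_segment (Multiset.mem_range.1 hk)
    have hkj' : k + 1 < m (j + 1) := lt_of_le_of_ne hkj fun h => hnt ⟨⟨j, hj⟩, h.symm⟩
    refine ⟨k + (n - j), Multiset.mem_Ico.2 ⟨?_, hm.add_sub_lt hj hkj'⟩,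
      hm.predRow_add_sub hj hjk hkj'⟩
    have := hm.self_le_apply hj.le; omega

theorem map_rowHeight_terminal_add (hm : DegenerationIndices n N m) (hn : 0 < n) :
    (Finset.univ.val.map fun i : Fin n => rowHeight n m (m (i + 1) - 1) + n) +
        (Multiset.Ico n N).map (rowHeight n m) =
      (Multiset.range N).map fun k => rowHeight n m k + n := by
  rw [hm.map_terminal (fun k => rowHeight n m k + n), hm.map_rowHeight_Ico hn, ← Multiset.map_add,
    Multiset.filter_add_not]

lemma range_eq_range_add_Ico (hm : DegenerationIndices n N m) :
    Multiset.range N = Multiset.range n + Multiset.Ico n N := by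
  rw [← Finset.range_val, ← Finset.range_val, Finset.range_eq_Ico, Finset.range_eq_Ico]
  exact (Multiset.Ico_add_Ico_eq_Ico (Nat.zero_le n) hm.le).symm

theorem sum_rowHeight_terminal (hm : DegenerationIndices n N m) (hn : 0 < n) :
    ∑ i : Fin n, (rowHeight n m (m (i + 1) - 1) + n) = N * n + n * (n - 1) / 2 := by
  have key := congrArg Multiset.sum (hm.map_rowHeight_terminal_add hn)
  rw [Multiset.sum_add] at key
  change ∑ i : Fin n, _ + ∑ t ∈ Finset.Ico n N, rowHeight n m t =
    ∑ k ∈ Finset.range N, (rowHeight n m k + n) at key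
  have hrange : ∑ k ∈ Finset.range N, (rowHeight n m k + n) =
      n * (n - 1) / 2 + ∑ t ∈ Finset.Ico n N, rowHeight n m t + N * n := by
    rw [Finset.sum_add_distrib, ← Finset.sum_range_add_sum_Ico _ hm.le,
      Finset.sum_congr rfl fun k hk => rowHeight_of_lt (Finset.mem_range.1 hk),
      Finset.sum_range_id, Finset.sum_const, Finset.card_range, smul_eq_mul]
  rw [hrange] at key
  omega

theorem rowHeight_terminal_mod_injective (hm : DegenerationIndices n N m) (hn : 0 < n) :
    Function.Injective fun i : Fin n => (rowHeight n m (m (i + 1) - 1) + n) % n := by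
  have key := congrArg (Multiset.map (· % n)) (hm.map_rowHeight_terminal_add hn)
  rw [hm.range_eq_range_add_Ico] at key
  simp only [Multiset.map_add, Multiset.map_map] at key
  have hIco : (Multiset.Ico n N).map ((· % n) ∘ fun k => rowHeight n m k + n) =
      (Multiset.Ico n N).map ((· % n) ∘ rowHeight n m) :=
    Multiset.map_congr rfl fun _ _ => Nat.add_mod_right _ _
  have hrange : (Multiset.range n).map ((· % n) ∘ fun k => rowHeight n m k + n) =
      Multiset.range n := by
    refine (Multiset.map_congr rfl fun k hk => ?_).trans (Multiset.map_id' _)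
    have hk := Multiset.mem_range.1 hk
    simp [rowHeight_of_lt hk, Nat.mod_eq_of_lt hk]
  rw [hIco, hrange] at key
  have hnodup := (add_right_cancel key).symm ▸ Multiset.nodup_range n
  intro i j hij
  exact (Multiset.nodup_map_iff_inj_on Finset.univ.nodup).1 hnodup i
    (Finset.mem_univ_val i) j (Finset.mem_univ_val j) hij

end DegenerationIndices

namespace MatrixClassM

variable {n N : ℕ} {A : Matrix (Fin N) (Fin N) ℝ} {m : ℕ → ℕ}

lemma apply_eq_zero (hA : MatrixClassM n N A m) {j : ℕ} (hj : j ≤ n) {k l : Fin N}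
    (hk : m j ≤ k + 1) (hl : (k : ℕ) + (n - j) < l) : A k l = 0 := by
  rcases lt_or_ge ((k : ℕ) + n) l with hfar | hnear
  · exact hA.band k l (by rw [abs_sub_comm, abs_of_nonneg (by omega)]; omega)
  · have := hA.degenerationIndices.apply_le_apply (a := n - (l - k) + 1) (by omega) hj
    rw [← hA.symm.apply k l]
    exact hA.d_zero (n - (l - k)) (by omega) k l (by omega) (by omega) (by omega)

lemma apply_pos (hA : MatrixClassM n N A m) {j : ℕ} (hj : j < n) {k l : Fin N} (hk : m j ≤ k)
    (hk' : k + 1 < m (j + 1)) (hl : (l : ℕ) = k + (n - j)) : 0 < A k l := by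
  rw [← hA.symm.apply k l]
  exact hA.d_pos j hj k l hl (by omega) hk'

end MatrixClassM

theorem vheight_phi_eq_rowHeight {n N : ℕ} (hnN : n < N) {A : Matrix (Fin N) (Fin N) ℝ} {m : ℕ → ℕ}
    (hA : MatrixClassM n N A m) {T : Matrix (Fin n) (Fin n) ℝ}
    (hT_upper : ∀ i j : Fin n, j < i → T i j = 0) (hT_diag : ∀ j : Fin n, T j j ≠ 0)
    {φ : Fin n → Fin N → ℂ[X]}
    (hφ_init : ∀ (j : Fin n) (i : Fin n),
      φ j (Fin.castLE (le_of_lt hnN) i) = C ((T j i : ℂ)))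
    (hφ_rec : ∀ (j : Fin n) (k : Fin N),
      (∀ i, 1 ≤ i → i ≤ n → m i ≠ (k : ℕ) + 1) →
      ∑ l, C ((A k l : ℂ)) * φ j l = X * φ j k)
    (k : Fin N) : vheight n (fun j => φ j k) = rowHeight n m k := by
  have hm := hA.degenerationIndices
  have hn := hm.pos (by omega)
  obtain ⟨t, htN⟩ := k
  induction t using Nat.strong_induction_on with
  | _ t ih =>
  rcases lt_or_ge t n with ht | ht
  · have hk : (⟨t, htN⟩ : Fin N) = Fin.castLE hnN.le ⟨t, ht⟩ := rfl
    simp only [hk, hφ_init, rowHeight_of_lt ht]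
    exact vheight_C_comp (i := ⟨t, ht⟩) (c := fun j => (T j ⟨t, ht⟩ : ℂ))
      (fun j hj => by simp [hT_upper j _ hj]) (Complex.ofReal_ne_zero.2 (hT_diag _))
  obtain ⟨hj, hlo, hhi, hsum⟩ := hm.predRow_spec ht htN
  obtain ⟨r, hr⟩ : ∃ r : Fin N, (r : ℕ) = predRow n m t :=
    ⟨⟨_, (predRow_lt hn ht).trans htN⟩, rfl⟩
  have hrow : ∑ l, C (A r l : ℂ) • (fun j => φ j l) = (X : ℂ[X]) • fun j => φ j r :=
    funext fun j => by
      simpa [Finset.sum_apply] using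
        hφ_rec j r fun i _ hi => hr ▸ hm.predRow_not_terminal ht htN i hi
  have hpos : 0 < A r ⟨t, htN⟩ := hA.apply_pos hj (hr ▸ hlo) (hr ▸ hhi) (by simp [hr, hsum])
  have ih' : ∀ l : Fin N, (l : ℕ) < t → vheight n (fun j => φ j l) = rowHeight n m l :=
    fun l hl => ih l hl l.isLt
  refine vheight_eq_of_sum_smul_eq (Φ := fun l j => φ j l) (a := fun l => (A r l : ℂ))
    (t := ⟨t, htN⟩) hrow (Complex.ofReal_ne_zero.2 hpos.ne') ?_ fun l hl => ?_
  · rw [ih' r (hr ▸ predRow_lt hn ht), hr, rowHeight_of_le hn ht, Nat.cast_add]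
  refine vheight_C_smul_lt fun hne => ?_
  have hlt : (l : ℕ) < t := by
    refine lt_of_le_of_ne ?_ fun h => hl (Fin.ext h)
    by_contra! hgt
    exact hne (by rw [hA.apply_eq_zero hj.le (by omega) (by omega), Complex.ofReal_zero])
  rw [ih' l hlt]
  exact_mod_cast rowHeight_strictMono hn hlt

theorem vheight_q_eq_rowHeight_add {n N : ℕ} (hnN : n < N) {A : Matrix (Fin N) (Fin N) ℝ}
    {m : ℕ → ℕ}
    (hA : MatrixClassM n N A m) {T : Matrix (Fin n) (Fin n) ℝ}
    (hT_upper : ∀ i j : Fin n, j < i → T i j = 0) (hT_diag : ∀ j : Fin n, T j j ≠ 0)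
    {φ : Fin n → Fin N → ℂ[X]}
    (hφ_init : ∀ (j : Fin n) (i : Fin n),
      φ j (Fin.castLE (le_of_lt hnN) i) = C ((T j i : ℂ)))
    (hφ_rec : ∀ (j : Fin n) (k : Fin N),
      (∀ i, 1 ≤ i → i ≤ n → m i ≠ (k : ℕ) + 1) →
      ∑ l, C ((A k l : ℂ)) * φ j l = X * φ j k)
    {Q : Fin n → Fin n → ℂ[X]}
    (hQ : ∀ (j i : Fin n) (k : Fin N), (k : ℕ) + 1 = m ((i : ℕ) + 1) →
      Q j i = X * φ j k - ∑ l, C ((A k l : ℂ)) * φ j l)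
    (i : Fin n) :
    vheight n (fun jj => Q jj i) = (rowHeight n m (m (i + 1) - 1) + n : ℕ) := by
  have hm := hA.degenerationIndices
  have hn := hm.pos (by omega)
  have hφ := vheight_phi_eq_rowHeight hnN hA hT_upper hT_diag hφ_init hφ_rec
  obtain ⟨k, hk⟩ : ∃ k : Fin N, (k : ℕ) + 1 = m (i + 1) := by
    have := hm.self_le_apply (a := i + 1) (by omega)
    have := hm.last ▸ hm.apply_le_apply (a := i + 1) (by omega) le_rfl
    exact ⟨⟨m (i + 1) - 1, by omega⟩, by simp only; omega⟩
  have hQk : (fun jj => Q jj i) =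
      (X : ℂ[X]) • (fun j => φ j k) - ∑ l, C (A k l : ℂ) • fun j => φ j l :=
    funext fun jj => by simpa [Finset.sum_apply] using hQ jj i k hk
  rw [hQk, show m (i + 1) - 1 = k by omega]
  refine vheight_sub_sum_eq _ _ (by rw [vheight_X_smul, hφ k, Nat.cast_add])
    fun l _ => vheight_C_smul_lt fun hne => ?_
  have hl : (l : ℕ) ≤ k + (n - (i + 1)) := by
    by_contra! h
    exact hne (by rw [hA.apply_eq_zero (j := i + 1) (by omega) hk.ge h, Complex.ofReal_zero])
  have hlt := hm.rowHeight_terminal_lt (j := i + 1) (by omega) (by omega)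
  rw [← hk, Nat.add_sub_cancel] at hlt
  rw [hφ l]
  exact_mod_cast ((rowHeight_strictMono hn).monotone hl).trans_lt hlt

theorem stmt15_general
    (n N : ℕ) (hnN : n < N)
    (A : Matrix (Fin N) (Fin N) ℝ) (m : ℕ → ℕ)
    (hA : MatrixClassM n N A m)
    (T : Matrix (Fin n) (Fin n) ℝ)
    (hT_upper : ∀ i j : Fin n, j < i → T i j = 0)
    (hT_diag : ∀ j : Fin n, T j j ≠ 0)
    (φ : Fin n → Fin N → Polynomial ℂ)
    (hφ_init : ∀ (j : Fin n) (i : Fin n),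
      φ j (Fin.castLE (le_of_lt hnN) i) = C ((T j i : ℂ)))
    (hφ_rec : ∀ (j : Fin n) (k : Fin N),
      (∀ i, 1 ≤ i → i ≤ n → m i ≠ (k : ℕ) + 1) →
      ∑ l, C ((A k l : ℂ)) * φ j l = X * φ j k)
    (Q : Fin n → Fin n → Polynomial ℂ)
    (hQ : ∀ (j i : Fin n) (k : Fin N), (k : ℕ) + 1 = m ((i : ℕ) + 1) →
      Q j i = X * φ j k - ∑ l, C ((A k l : ℂ)) * φ j l)
    :
    (∀ i j : Fin n, i ≠ j → ∀ a b : ℕ,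
      vheight n (fun jj => Q jj i) = (a : WithBot ℕ) →
      vheight n (fun jj => Q jj j) = (b : WithBot ℕ) →
        a % n ≠ b % n) ∧
    (∑ j : Fin n, vheight n (fun jj => Q jj j)
      = ((N * n + n * (n - 1) / 2 : ℕ) : WithBot ℕ)) := by
  have hm := hA.degenerationIndices
  have hn := hm.pos (by omega)
  have hq := vheight_q_eq_rowHeight_add hnN hA hT_upper hT_diag hφ_init hφ_rec hQ
  refine ⟨fun i j hij a b ha hb hab => hij (hm.rowHeight_terminal_mod_injective hn ?_), ?_⟩
  · have ha' : rowHeight n m (m (i + 1) - 1) + n = a := by exact_mod_cast (hq i).symm.trans ha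
    have hb' : rowHeight n m (m (j + 1) - 1) + n = b := by exact_mod_cast (hq j).symm.trans hb
    simp only [ha', hb', hab]
  · simp_rw [hq]
    rw [← Nat.cast_sum, hm.sum_rowHeight_terminal hn]

/-- The heights h(q_1),…,h(q_n) are distinct mod n and sum to Nn + n(n−1)/2. -/
theorem stmt15
    (n N : ℕ) (hn : 0 < n) (hnN : n < N)
    (A : Matrix (Fin N) (Fin N) ℝ) (m : ℕ → ℕ)
    (hA : MatrixClassM n N A m)
    (T : Matrix (Fin n) (Fin n) ℝ)
    (hT_upper : ∀ i j : Fin n, j < i → T i j = 0)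
    (hT_diag : ∀ j : Fin n, T j j ≠ 0)
    (φ : Fin n → Fin N → Polynomial ℂ)
    (hφ_init : ∀ (j : Fin n) (i : Fin n),
      φ j (Fin.castLE (le_of_lt hnN) i) = C ((T j i : ℂ)))
    (hφ_rec : ∀ (j : Fin n) (k : Fin N),
      (∀ i, 1 ≤ i → i ≤ n → m i ≠ (k : ℕ) + 1) →
      ∑ l, C ((A k l : ℂ)) * φ j l = X * φ j k)
    (Q : Fin n → Fin n → Polynomial ℂ)
    (hQ : ∀ (j i : Fin n) (k : Fin N), (k : ℕ) + 1 = m ((i : ℕ) + 1) →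
      Q j i = X * φ j k - ∑ l, C ((A k l : ℂ)) * φ j l)
    :
    (∀ i j : Fin n, i ≠ j → ∀ a b : ℕ,
      vheight n (fun jj => Q jj i) = (a : WithBot ℕ) →
      vheight n (fun jj => Q jj j) = (b : WithBot ℕ) →
        a % n ≠ b % n) ∧
    (∑ j : Fin n, vheight n (fun jj => Q jj j)
      = ((N * n + n * (n - 1) / 2 : ℕ) : WithBot ℕ)) :=
  stmt15_general n N hnN A m hA T hT_upper hT_diag φ hφ_init hφ_rec Q hQ
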